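/- Fix reals a < b and positive constants ρ, A, I, E, T₀, κ, G. Let ε_w, p_w, ε_φ : ℝ × ℝ → ℝ and σ_φ, N, ω : ℝ × ℝ → ℝ be smooth, and set v := p_w/(ρA), σ_w := T₀ ε_w, with σ_φ = E I ε_φ. Assume the flow-constrained (Euler–Bernoulli) dynamics on ℝ × [a,b]: ∂ₜε_w = ∂ₓv; ∂ₜp_w = ∂ₓσ_w + ∂ₓN; ∂ₜε_φ = ∂ₓω; together with the algebraic constraints 0 = ∂ₓσ_φ + N and 0 = ∂ₓv − ω. Define H_c(t) := (1/2)∫ₐᵇ ( p_w²/(ρA) + T₀ ε_w² + E I ε_φ² ) dx. Then for all t, H_c'(t) = [ v σ_w − v ∂ₓσ_φ + σ_φ ∂ₓv ]ₐᵇ, where [g]ₐᵇ := g(t,b) − g(t,a). -/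

import Mathlib

/-- Time partial derivative of a function `ℝ × ℝ → ℝ` (first variable). -/
noncomputable def dt (h : ℝ → ℝ → ℝ) : ℝ → ℝ → ℝ := fun t x => deriv (fun s => h s x) t
/-- Space partial derivative of a function `ℝ × ℝ → ℝ` (second variable). -/
noncomputable def dx (h : ℝ → ℝ → ℝ) : ℝ → ℝ → ℝ := fun t x => deriv (fun y => h t y) x

open Function MeasureTheory intervalIntegral Set Metric

lemma hasDerivAt_dt {f : ℝ → ℝ → ℝ} (hf : ContDiff ℝ (⊤ : ℕ∞) (uncurry f)) (t x : ℝ) :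
    HasDerivAt (fun s => f s x) (dt f t x) t := by
  have h1 : HasDerivAt (fun s : ℝ => ((s, x) : ℝ × ℝ)) (1, 0) t :=
    (hasDerivAt_id t).prodMk (hasDerivAt_const t x)
  have h := (((hf.differentiable (by simp)) (t, x)).hasFDerivAt).comp_hasDerivAt t h1
  exact h.differentiableAt.hasDerivAt

lemma hasDerivAt_dx {f : ℝ → ℝ → ℝ} (hf : ContDiff ℝ (⊤ : ℕ∞) (uncurry f)) (t x : ℝ) :
    HasDerivAt (fun y => f t y) (dx f t x) x := by
  have h1 : HasDerivAt (fun y : ℝ => ((t, y) : ℝ × ℝ)) (0, 1) x :=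
    (hasDerivAt_const x t).prodMk (hasDerivAt_id x)
  have h := (((hf.differentiable (by simp)) (t, x)).hasFDerivAt).comp_hasDerivAt x h1
  exact h.differentiableAt.hasDerivAt

lemma contDiff_dt {f : ℝ → ℝ → ℝ} (hf : ContDiff ℝ (⊤ : ℕ∞) (uncurry f)) :
    ContDiff ℝ (⊤ : ℕ∞) (uncurry (dt f)) := by
  have key : ∀ p : ℝ × ℝ, uncurry (dt f) p = fderiv ℝ (uncurry f) p (1, 0) := by
    rintro ⟨t, x⟩
    have h1 : HasDerivAt (fun s : ℝ => ((s, x) : ℝ × ℝ)) (1, 0) t :=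
      (hasDerivAt_id t).prodMk (hasDerivAt_const t x)
    have h := (((hf.differentiable (by simp)) (t, x)).hasFDerivAt).comp_hasDerivAt t h1
    exact h.deriv
  have h2 : ContDiff ℝ (⊤ : ℕ∞) fun p : ℝ × ℝ => fderiv ℝ (uncurry f) p (1, 0) :=
    (hf.fderiv_right (by simp)).clm_apply contDiff_const
  exact (funext key) ▸ h2

lemma contDiff_dx {f : ℝ → ℝ → ℝ} (hf : ContDiff ℝ (⊤ : ℕ∞) (uncurry f)) :
    ContDiff ℝ (⊤ : ℕ∞) (uncurry (dx f)) := by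
  have key : ∀ p : ℝ × ℝ, uncurry (dx f) p = fderiv ℝ (uncurry f) p (0, 1) := by
    rintro ⟨t, x⟩
    have h1 : HasDerivAt (fun y : ℝ => ((t, y) : ℝ × ℝ)) (0, 1) x :=
      (hasDerivAt_const x t).prodMk (hasDerivAt_id x)
    have h := (((hf.differentiable (by simp)) (t, x)).hasFDerivAt).comp_hasDerivAt x h1
    exact h.deriv
  have h2 : ContDiff ℝ (⊤ : ℕ∞) fun p : ℝ × ℝ => fderiv ℝ (uncurry f) p (0, 1) :=
    (hf.fderiv_right (by simp)).clm_apply contDiff_const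
  exact (funext key) ▸ h2

lemma hasDerivAt_intervalIntegral {f : ℝ → ℝ → ℝ} (hf : ContDiff ℝ (⊤ : ℕ∞) (uncurry f))
    (a b t : ℝ) :
    HasDerivAt (fun s => ∫ x in a..b, f s x) (∫ x in a..b, dt f t x) t := by
  have hcont : Continuous (uncurry f) := hf.continuous
  have hcont' : Continuous (uncurry (dt f)) := (contDiff_dt hf).continuous
  have hK : IsCompact (closedBall t 1 ×ˢ uIcc a b) :=
    (isCompact_closedBall t 1).prod isCompact_uIcc
  obtain ⟨C, hC⟩ := hK.exists_bound_of_continuousOn hcont'.continuousOn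
  have key := hasDerivAt_integral_of_dominated_loc_of_deriv_le (F := f) (F' := dt f)
    (bound := fun _ => C) (μ := volume) (a := a) (b := b) (ball_mem_nhds t one_pos)
    (Filter.Eventually.of_forall fun s =>
      ((hcont.comp (Continuous.prodMk_right s)).aestronglyMeasurable))
    ((hcont.comp (Continuous.prodMk_right t)).intervalIntegrable a b)
    ((hcont'.comp (Continuous.prodMk_right t)).aestronglyMeasurable)
    (Filter.Eventually.of_forall fun x hx s hs => by
      have : (s, x) ∈ closedBall t 1 ×ˢ uIcc a b :=
        ⟨ball_subset_closedBall hs, uIoc_subset_uIcc hx⟩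
      exact hC (s, x) this)
    (intervalIntegrable_const)
    (Filter.Eventually.of_forall fun x hx s hs => hasDerivAt_dt hf s x)
  exact key.2

/-- Power balance for the flow-constrained (Euler–Bernoulli) beam model:
`H_c'(t) = [v σ_w − v ∂ₓσ_φ + σ_φ ∂ₓv]ₐᵇ`. -/
theorem stmt10 (a b : ℝ) (hab : a < b) (ρ A I E T₀ κ G : ℝ)
    (hρ : 0 < ρ) (hA : 0 < A) (hI : 0 < I) (hE : 0 < E) (hT : 0 < T₀) (hκ : 0 < κ)
    (hG : 0 < G)
    (εw pw εφ σφ N ω : ℝ → ℝ → ℝ)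
    (hεw : ContDiff ℝ (⊤ : ℕ∞) (Function.uncurry εw)) (hpw : ContDiff ℝ (⊤ : ℕ∞) (Function.uncurry pw))
    (hεφ : ContDiff ℝ (⊤ : ℕ∞) (Function.uncurry εφ)) (hσφ : ContDiff ℝ (⊤ : ℕ∞) (Function.uncurry σφ))
    (hN : ContDiff ℝ (⊤ : ℕ∞) (Function.uncurry N)) (hω : ContDiff ℝ (⊤ : ℕ∞) (Function.uncurry ω))
    (v σw : ℝ → ℝ → ℝ)
    (hv : v = fun t x => pw t x / (ρ * A))
    (hσw : σw = fun t x => T₀ * εw t x)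
    (hσφd : σφ = fun t x => E * I * εφ t x)
    (hdyn₁ : ∀ t : ℝ, ∀ x ∈ Set.Icc a b, dt εw t x = dx v t x)
    (hdyn₂ : ∀ t : ℝ, ∀ x ∈ Set.Icc a b, dt pw t x = dx σw t x + dx N t x)
    (hdyn₃ : ∀ t : ℝ, ∀ x ∈ Set.Icc a b, dt εφ t x = dx ω t x)
    (hcon₁ : ∀ t : ℝ, ∀ x ∈ Set.Icc a b, (0 : ℝ) = dx σφ t x + N t x)
    (hcon₂ : ∀ t : ℝ, ∀ x ∈ Set.Icc a b, (0 : ℝ) = dx v t x - ω t x) :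
    ∀ t : ℝ,
      HasDerivAt
        (fun s => (1 / 2 : ℝ) * ∫ x in a..b,
          ((pw s x) ^ 2 / (ρ * A) + T₀ * (εw s x) ^ 2 + E * I * (εφ s x) ^ 2))
        ((v t b * σw t b - v t b * dx σφ t b + σφ t b * dx v t b)
          - (v t a * σw t a - v t a * dx σφ t a + σφ t a * dx v t a)) t := by
  intro t
  -- smoothness of the auxiliary fields
  have huv : ContDiff ℝ (⊤ : ℕ∞) (Function.uncurry v) := by
    rw [hv]; exact hpw.div_const (ρ * A)
  have huσw : ContDiff ℝ (⊤ : ℕ∞) (Function.uncurry σw) := by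
    rw [hσw]; exact contDiff_const.mul hεw
  have hudxσφ : ContDiff ℝ (⊤ : ℕ∞) (Function.uncurry (dx σφ)) := contDiff_dx hσφ
  have hudxv : ContDiff ℝ (⊤ : ℕ∞) (Function.uncurry (dx v)) := contDiff_dx huv
  have hudxσw : ContDiff ℝ (⊤ : ℕ∞) (Function.uncurry (dx σw)) := contDiff_dx huσw
  have huddσφ : ContDiff ℝ (⊤ : ℕ∞) (Function.uncurry (dx (dx σφ))) := contDiff_dx hudxσφ
  have huddv : ContDiff ℝ (⊤ : ℕ∞) (Function.uncurry (dx (dx v))) := contDiff_dx hudxv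
  -- step 1: differentiate under the integral sign
  have hF₁ : ContDiff ℝ (⊤ : ℕ∞) (Function.uncurry
      (fun s y => pw s y ^ 2 / (ρ * A) + T₀ * εw s y ^ 2 + E * I * εφ s y ^ 2)) :=
    (((hpw.pow 2).div_const (ρ * A)).add (contDiff_const.mul (hεw.pow 2))).add
      (contDiff_const.mul (hεφ.pow 2))
  have h1 : HasDerivAt
      (fun s => ∫ x in a..b, (pw s x ^ 2 / (ρ * A) + T₀ * εw s x ^ 2 + E * I * εφ s x ^ 2))
      (∫ x in a..b,
        dt (fun s y => pw s y ^ 2 / (ρ * A) + T₀ * εw s y ^ 2 + E * I * εφ s y ^ 2) t x) t :=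
    hasDerivAt_intervalIntegral hF₁ a b t
  -- step 2: compute the time derivative of the integrand
  have h2 : ∀ x : ℝ,
      dt (fun s y => pw s y ^ 2 / (ρ * A) + T₀ * εw s y ^ 2 + E * I * εφ s y ^ 2) t x
        = 2 * (v t x * dt pw t x + σw t x * dt εw t x + σφ t x * dt εφ t x) := by
    intro x
    have hp := hasDerivAt_dt hpw t x
    have hw := hasDerivAt_dt hεw t x
    have hφ := hasDerivAt_dt hεφ t x
    have h := (((hp.pow 2).div_const (ρ * A)).add ((hw.pow 2).const_mul T₀)).add
      ((hφ.pow 2).const_mul (E * I))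
    simp only [hv, hσw, hσφd]
    exact h.deriv.trans (by push_cast; ring)
  -- step 3: FTC antiderivative
  have h3 : ∀ y : ℝ, HasDerivAt (fun z => v t z * σw t z - v t z * dx σφ t z + σφ t z * dx v t z)
      (((dx v t y * σw t y + v t y * dx σw t y)
        - (dx v t y * dx σφ t y + v t y * dx (dx σφ) t y))
        + (dx σφ t y * dx v t y + σφ t y * dx (dx v) t y)) y := fun y =>
    (((hasDerivAt_dx huv t y).mul (hasDerivAt_dx huσw t y)).sub
      ((hasDerivAt_dx huv t y).mul (hasDerivAt_dx hudxσφ t y))).add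
      ((hasDerivAt_dx hσφ t y).mul (hasDerivAt_dx hudxv t y))
  have cdxv : Continuous fun y => dx v t y := hudxv.continuous.comp (Continuous.prodMk_right t)
  have cv : Continuous fun y => v t y := huv.continuous.comp (Continuous.prodMk_right t)
  have cσw : Continuous fun y => σw t y := huσw.continuous.comp (Continuous.prodMk_right t)
  have cdxσw : Continuous fun y => dx σw t y := hudxσw.continuous.comp (Continuous.prodMk_right t)
  have cdxσφ : Continuous fun y => dx σφ t y := hudxσφ.continuous.comp (Continuous.prodMk_right t)
  have cddσφ : Continuous fun y => dx (dx σφ) t y := huddσφ.continuous.comp (Continuous.prodMk_right t)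
  have cσφ : Continuous fun y => σφ t y := hσφ.continuous.comp (Continuous.prodMk_right t)
  have cddv : Continuous fun y => dx (dx v) t y := huddv.continuous.comp (Continuous.prodMk_right t)
  have hExCont : Continuous fun y =>
      ((dx v t y * σw t y + v t y * dx σw t y)
        - (dx v t y * dx σφ t y + v t y * dx (dx σφ) t y))
        + (dx σφ t y * dx v t y + σφ t y * dx (dx v) t y) :=
    (((cdxv.mul cσw).add (cv.mul cdxσw)).sub ((cdxv.mul cdxσφ).add (cv.mul cddσφ))).add
      ((cdxσφ.mul cdxv).add (cσφ.mul cddv))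
  have hFTC : (∫ y in a..b,
      (((dx v t y * σw t y + v t y * dx σw t y)
        - (dx v t y * dx σφ t y + v t y * dx (dx σφ) t y))
        + (dx σφ t y * dx v t y + σφ t y * dx (dx v) t y)))
      = (v t b * σw t b - v t b * dx σφ t b + σφ t b * dx v t b)
        - (v t a * σw t a - v t a * dx σφ t a + σφ t a * dx v t a) :=
    intervalIntegral.integral_eq_sub_of_hasDerivAt (fun y _ => h3 y)
      (hExCont.intervalIntegrable a b)
  -- step 4: interior identity
  have h4 : ∀ x ∈ Set.Ioo a b,
      v t x * dt pw t x + σw t x * dt εw t x + σφ t x * dt εφ t x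
        = ((dx v t x * σw t x + v t x * dx σw t x)
            - (dx v t x * dx σφ t x + v t x * dx (dx σφ) t x))
            + (dx σφ t x * dx v t x + σφ t x * dx (dx v) t x) := by
    intro x hxm
    have hx : x ∈ Set.Icc a b := Set.Ioo_subset_Icc_self hxm
    have hmem : Set.Icc a b ∈ nhds x := Icc_mem_nhds hxm.1 hxm.2
    have hN' : dx N t x = -(dx (dx σφ) t x) := by
      have hev : (fun y => N t y) =ᶠ[nhds x] fun y => -(dx σφ t y) :=
        Filter.eventuallyEq_of_mem hmem fun y hy => by have := hcon₁ t y hy; linarith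
      have h' := hev.deriv_eq
      have h'' := ((hasDerivAt_dx hudxσφ t x).neg).deriv
      exact h'.trans h''
    have hω' : dx ω t x = dx (dx v) t x := by
      have hev : (fun y => ω t y) =ᶠ[nhds x] fun y => dx v t y :=
        Filter.eventuallyEq_of_mem hmem fun y hy => by have := hcon₂ t y hy; linarith
      exact hev.deriv_eq
    rw [hdyn₁ t x hx, hdyn₂ t x hx, hdyn₃ t x hx, hN', hω']
    ring
  -- step 5: a.e. congruence of the integrals
  have h5 : (∫ x in a..b,
      dt (fun s y => pw s y ^ 2 / (ρ * A) + T₀ * εw s y ^ 2 + E * I * εφ s y ^ 2) t x)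
      = ∫ x in a..b, 2 *
        (((dx v t x * σw t x + v t x * dx σw t x)
          - (dx v t x * dx σφ t x + v t x * dx (dx σφ) t x))
          + (dx σφ t x * dx v t x + σφ t x * dx (dx v) t x)) := by
    apply intervalIntegral.integral_congr_ae
    have hae : ∀ᵐ x : ℝ, x ≠ b := by
      rw [MeasureTheory.ae_iff]
      simpa using measure_singleton b
    filter_upwards [hae] with x hxb hxI
    have hIoo : x ∈ Set.Ioo a b := by
      rw [Set.uIoc_of_le hab.le] at hxI
      exact ⟨hxI.1, lt_of_le_of_ne hxI.2 hxb⟩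
    rw [h2 x, h4 x hIoo]
  -- assemble
  have h1' := h1.const_mul (1 / 2 : ℝ)
  rw [h5, intervalIntegral.integral_const_mul, hFTC] at h1'
  exact h1'.congr_deriv (by ring)
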